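/- Let d ≥ 2, let ζ ⊂ ℤ^d be finite, and let ζ = ζ1 ∪ ζ2 = ζ1' ∪ ζ2' be two partitions of ζ into disjoint sets satisfying ζ2 ∩ ∂ζ ⊆ ζ2' ∩ ∂ζ, and let x ∈ ∂ζ ∩ ζ1 ∩ ζ1'. Fix an arbitrary assignment w of strictly positive real weights to the nearest-neighbor edges of ℤ^d. Then for every z ∉ ζ such that S_{ζ1}(z) = S_{{x}}(z) < S_{ζ2}(z), one has S_{ζ1'}(z) ≤ S_{{x}}(z) ≤ S_{ζ2'}(z). (This is the equal-rate, deterministic form of Lemma 1(b) of the paper: a type-1 site captured via the source x under the first partition remains captured no later, and not by type 2 earlier, under the second partition.) -/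

import Mathlib

open MeasureTheory ProbabilityTheory
open scoped ENNReal

/-- Vertices of the lattice `ℤ^d`. -/
abbrev V (d : ℕ) := Fin d → ℤ

/-- Nearest-neighbor adjacency: `δ(x,y) = 1` with `δ(x,y) = ∑ i, |x i - y i|`. -/
def Adj {d : ℕ} (x y : V d) : Prop := (∑ i, |x i - y i|) = 1

lemma adj_symm {d : ℕ} : Symmetric (@Adj d) := by
  intro x y h
  unfold Adj at h ⊢
  rw [Finset.sum_congr rfl fun i _ => abs_sub_comm (y i) (x i)]
  exact h

/-- The set of nearest-neighbor edges, as unordered pairs. -/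
def EdgeSet (d : ℕ) : Set (Sym2 (V d)) := Sym2.fromRel (⟨fun _ _ h => adj_symm (d := d) h⟩ : Std.Symm (@Adj d))

open Classical in
/-- From weights on edges, weights on ordered pairs of adjacent vertices
(`0` on non-adjacent pairs). -/
noncomputable def edgeWeight {d : ℕ} (ω : EdgeSet d → ℝ) (x y : V d) : ℝ :=
  if h : Adj x y then ω ⟨s(x, y), Sym2.fromRel_prop.mpr h⟩ else 0

/-- Passage time of a finite path: sum of weights of its edges. -/
def pathTime {d : ℕ} (w : V d → V d → ℝ) (p : List (V d)) : ℝ :=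
  (List.zipWith w p p.tail).sum

/-- A path starting in `src`, ending at `z`, whose vertices other than the
starting vertex avoid `avoid`. -/
def ValidPath {d : ℕ} (src avoid : Set (V d)) (z : V d) (p : List (V d)) : Prop :=
  p.Chain' Adj ∧ (∃ a ∈ src, p.head? = some a) ∧ p.getLast? = some z ∧
    ∀ v ∈ p.tail, v ∉ avoid

/-- First-passage time from `src` to `z`, over paths whose vertices other than the
starting vertex avoid `avoid`; `∞` if there is no such path. -/
noncomputable def T {d : ℕ} (w : V d → V d → ℝ) (src avoid : Set (V d)) (z : V d) : ℝ≥0∞ :=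
  ⨅ (p : List (V d)) (_ : ValidPath src avoid z p), ENNReal.ofReal (pathTime w p)

/-- Mutual unbounded growth: both `{z : T₁(z) < T₂(z)}` and `{z : T₂(z) < T₁(z)}`
are infinite. -/
def MutualUnbounded {d : ℕ} (ξ1 ξ2 : Set (V d)) (w : V d → V d → ℝ) : Prop :=
  {z : V d | z ∉ ξ1 ∪ ξ2 ∧ T w ξ1 (ξ1 ∪ ξ2) z < T w ξ2 (ξ1 ∪ ξ2) z}.Infinite ∧
  {z : V d | z ∉ ξ1 ∪ ξ2 ∧ T w ξ2 (ξ1 ∪ ξ2) z < T w ξ1 (ξ1 ∪ ξ2) z}.Infinite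

/-- `ξ1` strangles `ξ2`: there is no infinite self-avoiding nearest-neighbor path
starting at a vertex of `ξ2` and avoiding `ξ1`. -/
def Strangles {d : ℕ} (ξ1 ξ2 : Set (V d)) : Prop :=
  ¬ ∃ f : ℕ → V d, Function.Injective f ∧ (∀ n, Adj (f n) (f (n + 1))) ∧
      f 0 ∈ ξ2 ∧ ∀ n, f n ∉ ξ1

/-- A pair is fertile if neither set strangles the other. -/
def Fertile {d : ℕ} (ξ1 ξ2 : Set (V d)) : Prop :=
  ¬ Strangles ξ1 ξ2 ∧ ¬ Strangles ξ2 ξ1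

/-- The family `W` is i.i.d. with exponential (rate 1) marginals. -/
def IsIIDExp1 {d : ℕ} {Ω : Type*} [MeasurableSpace Ω] (P : Measure Ω)
    (W : Ω → EdgeSet d → ℝ) : Prop :=
  (∀ e : EdgeSet d, Measurable fun ω => W ω e) ∧
  (∀ e : EdgeSet d, Measure.map (fun ω => W ω e) P = expMeasure 1) ∧
  iIndepFun (m := fun _ : EdgeSet d => Real.measurableSpace) (fun e ω => W ω e) P

/-- The boundary of a set: its members having a nearest neighbor outside the set. -/
def bdry {d : ℕ} (η : Set (V d)) : Set (V d) := {x ∈ η | ∃ y ∉ η, Adj x y}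

section FirstPassage

variable {d : ℕ} {w : V d → V d → ℝ} {src src' s t avoid : Set (V d)} {z : V d}

lemma ValidPath.mono_src {p : List (V d)} (hss : src ⊆ src') (hp : ValidPath src avoid z p) :
    ValidPath src' avoid z p := by
  obtain ⟨hchain, ⟨a, ha, hhead⟩, hlast, havoid⟩ := hp
  exact ⟨hchain, ⟨a, hss ha, hhead⟩, hlast, havoid⟩

lemma T_anti_src (hss : src ⊆ src') : T w src' avoid z ≤ T w src avoid z :=
  le_iInf₂ fun p hp => iInf₂_le p (hp.mono_src hss)

lemma T_union_src : T w (s ∪ t) avoid z = min (T w s avoid z) (T w t avoid z) := by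
  refine le_antisymm (le_min (T_anti_src Set.subset_union_left)
    (T_anti_src Set.subset_union_right)) (le_iInf₂ fun p hp => ?_)
  obtain ⟨hchain, ⟨a, ha, hhead⟩, hlast, havoid⟩ := hp
  rcases ha with ha | ha
  · exact (min_le_left _ _).trans (iInf₂_le p ⟨hchain, ⟨a, ha, hhead⟩, hlast, havoid⟩)
  · exact (min_le_right _ _).trans (iInf₂_le p ⟨hchain, ⟨a, ha, hhead⟩, hlast, havoid⟩)

end FirstPassage

theorem lemma_one_b_general {d : ℕ}
    (ζ ζ1 ζ2 ζ1' ζ2' : Finset (V d))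
    (hu : ζ1 ∪ ζ2 = ζ)
    (hu' : ζ1' ∪ ζ2' = ζ)
    (x : V d) (hx1' : x ∈ ζ1')
    (w : V d → V d → ℝ) :
    ∀ z : V d, z ∉ (ζ : Set (V d)) →
      T w (ζ1 : Set (V d)) (ζ : Set (V d)) z = T w {x} (ζ : Set (V d)) z →
      T w {x} (ζ : Set (V d)) z < T w (ζ2 : Set (V d)) (ζ : Set (V d)) z →
      T w (ζ1' : Set (V d)) (ζ : Set (V d)) z ≤ T w {x} (ζ : Set (V d)) z ∧
        T w {x} (ζ : Set (V d)) z ≤ T w (ζ2' : Set (V d)) (ζ : Set (V d)) z := by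
  intro z _ heq hlt
  refine ⟨T_anti_src (Set.singleton_subset_iff.2 hx1'), ?_⟩
  have hζ2' : (ζ2' : Set (V d)) ⊆ ζ := by
    rw [← hu', Finset.coe_union]
    exact Set.subset_union_right
  calc T w {x} ζ z = min (T w ζ1 ζ z) (T w ζ2 ζ z) := by rw [heq, min_eq_left hlt.le]
    _ = T w (ζ1 ∪ ζ2 : Finset (V d)) ζ z := by rw [Finset.coe_union, T_union_src]
    _ = T w ζ ζ z := by rw [hu]
    _ ≤ T w ζ2' ζ z := T_anti_src hζ2'

/-- Lemma 1(b), deterministic equal-rate form: a site captured strictly first by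
type 1 via the boundary source `x ∈ ∂ζ ∩ ζ1 ∩ ζ1'` under the first partition remains
captured no later, and not by type 2 strictly earlier, under the second partition. -/
theorem lemma_one_b {d : ℕ} (hd : 2 ≤ d)
    (ζ ζ1 ζ2 ζ1' ζ2' : Finset (V d))
    (hu : ζ1 ∪ ζ2 = ζ) (hdis : Disjoint ζ1 ζ2)
    (hu' : ζ1' ∪ ζ2' = ζ) (hdis' : Disjoint ζ1' ζ2')
    (hbd : (ζ2 : Set (V d)) ∩ bdry (ζ : Set (V d)) ⊆ (ζ2' : Set (V d)) ∩ bdry (ζ : Set (V d)))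
    (x : V d) (hx : x ∈ bdry (ζ : Set (V d))) (hx1 : x ∈ ζ1) (hx1' : x ∈ ζ1')
    (w : V d → V d → ℝ) (hsymm : ∀ x y, w x y = w y x)
    (hpos : ∀ x y, Adj x y → 0 < w x y) :
    ∀ z : V d, z ∉ (ζ : Set (V d)) →
      T w (ζ1 : Set (V d)) (ζ : Set (V d)) z = T w {x} (ζ : Set (V d)) z →
      T w {x} (ζ : Set (V d)) z < T w (ζ2 : Set (V d)) (ζ : Set (V d)) z →
      T w (ζ1' : Set (V d)) (ζ : Set (V d)) z ≤ T w {x} (ζ : Set (V d)) z ∧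
        T w {x} (ζ : Set (V d)) z ≤ T w (ζ2' : Set (V d)) (ζ : Set (V d)) z :=
  lemma_one_b_general ζ ζ1 ζ2 ζ1' ζ2' hu hu' x hx1' w
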